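/- arXiv:2404.08463 — 2 statements merged into one kernel-verified Lean document; each statement's English description precedes it below -/
import Mathlib

section
/- For M ∈ Sp(2n), every matrix of the form η = S J^T M with S skew-symmetric is orthogonal to every tangent vector Δ = ΩM (Ω Hamiltonian) with respect to the right-invariant metric: g_M(ΩM, S J^T M) = 0. -/
open Matrix

/-- The standard symplectic matrix `J_{2n} = [[0, I_n], [-I_n, 0]]`. -/
def symplJ (n : ℕ) : Matrix (Fin n ⊕ Fin n) (Fin n ⊕ Fin n) ℝ :=
  Matrix.fromBlocks 0 1 (-1) 0

/-- The symplectic inverse `X⁺ = Jᵀ Xᵀ J`. -/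
def symplInv {n : ℕ} (X : Matrix (Fin n ⊕ Fin n) (Fin n ⊕ Fin n) ℝ) :
    Matrix (Fin n ⊕ Fin n) (Fin n ⊕ Fin n) ℝ :=
  (symplJ n)ᵀ * Xᵀ * symplJ n

/-- The right-invariant metric `g_M(X₁,X₂) = (1/2) tr((X₁ M⁺)ᵀ X₂ M⁺)`. -/
noncomputable def metricG {n : ℕ}
    (M X₁ X₂ : Matrix (Fin n ⊕ Fin n) (Fin n ⊕ Fin n) ℝ) : ℝ :=
  (1 / 2 : ℝ) * Matrix.trace ((X₁ * symplInv M)ᵀ * (X₂ * symplInv M))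

lemma symplJ_transpose (n : ℕ) : (symplJ n)ᵀ = -symplJ n := by
  simp [symplJ, Matrix.fromBlocks_transpose]
  rw [show (-(fromBlocks 0 1 (-1) 0) : Matrix (Fin n ⊕ Fin n) (Fin n ⊕ Fin n) ℝ)
      = fromBlocks (-0) (-1) (-(-1)) (-0) from (Matrix.fromBlocks_neg _ _ _ _)]
  norm_num

lemma symplJ_mul_transpose (n : ℕ) : symplJ n * (symplJ n)ᵀ = 1 := by
  rw [symplJ_transpose, Matrix.mul_neg, symplJ, Matrix.fromBlocks_multiply]
  rw [show (1 : Matrix (Fin n ⊕ Fin n) (Fin n ⊕ Fin n) ℝ)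
      = fromBlocks 1 0 0 1 from (Matrix.fromBlocks_one).symm]
  rw [show (-(fromBlocks (0*0+1*(-1)) (0*1+1*0) ((-1)*0+0*(-1)) ((-1)*1+0*0)) :
      Matrix (Fin n ⊕ Fin n) (Fin n ⊕ Fin n) ℝ)
      = fromBlocks (-(0*0+1*(-1))) (-(0*1+1*0)) (-((-1)*0+0*(-1))) (-((-1)*1+0*0))
      from (Matrix.fromBlocks_neg _ _ _ _)]
  norm_num

lemma symplJ_transpose_mul (n : ℕ) : (symplJ n)ᵀ * symplJ n = 1 := by
  have := symplJ_mul_transpose n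
  rw [symplJ_transpose] at this ⊢
  rw [Matrix.neg_mul]
  rw [Matrix.mul_neg] at this
  have h2 : symplJ n * symplJ n = -1 := by
    have := congrArg Neg.neg this; simpa using this
  rw [h2]; simp

theorem normal_space_orthogonal_to_tangent {n : ℕ}
    (M Ω S : Matrix (Fin n ⊕ Fin n) (Fin n ⊕ Fin n) ℝ)
    (hM : symplInv M * M = 1)
    (hΩ : symplInv Ω = -Ω)
    (hS : Sᵀ = -S) :
    metricG M (Ω * M) (S * (symplJ n)ᵀ * M) = 0 := by
  have hMM : M * symplInv M = 1 := mul_eq_one_comm.mp hM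
  have e1 : Ω * M * symplInv M = Ω := by
    rw [Matrix.mul_assoc, hMM, Matrix.mul_one]
  have e2 : S * (symplJ n)ᵀ * M * symplInv M = S * (symplJ n)ᵀ := by
    rw [Matrix.mul_assoc, hMM, Matrix.mul_one]
  unfold metricG
  rw [e1, e2]
  have hΩT : Ωᵀ = -(symplJ n * Ω * (symplJ n)ᵀ) := by
    have h := hΩ
    unfold symplInv at h
    calc Ωᵀ = (symplJ n * (symplJ n)ᵀ) * Ωᵀ * (symplJ n * (symplJ n)ᵀ) := by
          rw [symplJ_mul_transpose, Matrix.one_mul, Matrix.mul_one]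
      _ = symplJ n * ((symplJ n)ᵀ * Ωᵀ * symplJ n) * (symplJ n)ᵀ := by
          simp only [Matrix.mul_assoc]
      _ = symplJ n * (-Ω) * (symplJ n)ᵀ := by rw [h]
      _ = -(symplJ n * Ω * (symplJ n)ᵀ) := by
          rw [Matrix.mul_neg, Matrix.neg_mul]
  have key1 : Matrix.trace (Ωᵀ * (S * (symplJ n)ᵀ))
      = -Matrix.trace (Ω * ((symplJ n)ᵀ * S)) := by
    rw [hΩT, Matrix.neg_mul, Matrix.trace_neg, neg_inj]
    calc Matrix.trace (symplJ n * Ω * (symplJ n)ᵀ * (S * (symplJ n)ᵀ))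
        = Matrix.trace (symplJ n * (Ω * ((symplJ n)ᵀ * (S * (symplJ n)ᵀ)))) := by
          simp only [Matrix.mul_assoc]
      _ = Matrix.trace (Ω * ((symplJ n)ᵀ * (S * ((symplJ n)ᵀ * symplJ n)))) := by
          rw [Matrix.trace_mul_comm]
          simp only [Matrix.mul_assoc]
      _ = Matrix.trace (Ω * ((symplJ n)ᵀ * S)) := by
          rw [symplJ_transpose_mul, Matrix.mul_one]
  have key2 : Matrix.trace (Ωᵀ * (S * (symplJ n)ᵀ))
      = Matrix.trace (Ω * ((symplJ n)ᵀ * S)) := by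
    calc Matrix.trace (Ωᵀ * (S * (symplJ n)ᵀ))
        = Matrix.trace ((Ωᵀ * (S * (symplJ n)ᵀ))ᵀ) := (Matrix.trace_transpose _).symm
      _ = Matrix.trace (symplJ n * (Sᵀ * Ω)) := by
          simp only [Matrix.transpose_mul, Matrix.transpose_transpose,
            Matrix.mul_assoc]
      _ = -Matrix.trace (symplJ n * (S * Ω)) := by
          rw [hS]; simp [Matrix.mul_neg, Matrix.neg_mul]
      _ = -Matrix.trace (Ω * (symplJ n * S)) := by
          rw [Matrix.trace_mul_comm]; simp only [Matrix.mul_assoc]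
          rw [Matrix.trace_mul_comm S]; simp only [Matrix.mul_assoc]
      _ = Matrix.trace (Ω * ((symplJ n)ᵀ * S)) := by
          rw [symplJ_transpose]
          simp [Matrix.neg_mul, Matrix.mul_neg]
  have hz : Matrix.trace (Ωᵀ * (S * (symplJ n)ᵀ)) = 0 := by linarith
  rw [hz, mul_zero]
end

section
/- Let X, Y ∈ ℝ^{2n×m} with I_m − (t/2) Y^T X invertible and I_{2n} − (t/2) X Y^T invertible. Then cay((t/2) X Y^T) U = U + t X (I_m − (t/2) Y^T X)^{-1} Y^T U for any U ∈ ℝ^{2n×2k}, where cay(A) = (I + A)(I − A)^{-1}. -/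
open Matrix

/-- The Cayley transform `cay(A) = (I + A)(I − A)⁻¹`. -/
noncomputable def cay {N : ℕ} (A : Matrix (Fin N) (Fin N) ℝ) :
    Matrix (Fin N) (Fin N) ℝ :=
  (1 + A) * (1 - A)⁻¹

theorem cayley_low_rank_formula {n m k : ℕ} (t : ℝ)
    (X Y : Matrix (Fin (2 * n)) (Fin m) ℝ)
    (U : Matrix (Fin (2 * n)) (Fin (2 * k)) ℝ)
    (h1 : IsUnit (1 - (t / 2) • (Yᵀ * X)).det)
    (h2 : IsUnit (1 - (t / 2) • (X * Yᵀ)).det) :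
    cay ((t / 2) • (X * Yᵀ)) * U =
      U + t • (X * (1 - (t / 2) • (Yᵀ * X))⁻¹ * (Yᵀ * U)) := by
  set c := t / 2 with hc
  set B := (1 - c • (Yᵀ * X))⁻¹ with hBdef
  have hMB : (1 - c • (Yᵀ * X)) * B = 1 := mul_nonsing_inv _ h1
  rw [sub_mul, one_mul, smul_mul_assoc] at hMB
  have hB : B = 1 + c • (Yᵀ * X * B) := by
    rw [← hMB]; abel
  have step : (X * Yᵀ) * (1 + c • (X * B * Yᵀ)) = X * B * Yᵀ := by
    conv_rhs => rw [hB]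
    simp only [Matrix.mul_add, Matrix.mul_one, Matrix.add_mul, Matrix.one_mul,
      Matrix.mul_smul, Matrix.smul_mul, Matrix.mul_assoc]
  have hinv : (1 - c • (X * Yᵀ))⁻¹ = 1 + c • (X * B * Yᵀ) := by
    apply inv_eq_right_inv
    rw [sub_mul, one_mul, smul_mul_assoc, step]
    abel
  have h2c : c + c = t := by rw [hc]; ring
  have main : (1 + c • (X * Yᵀ)) * (1 + c • (X * B * Yᵀ)) = 1 + t • (X * B * Yᵀ) := by
    rw [add_mul, one_mul, smul_mul_assoc, step, ← h2c, add_smul]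
    abel
  show (1 + c • (X * Yᵀ)) * (1 - c • (X * Yᵀ))⁻¹ * U = _
  rw [hinv, main, Matrix.add_mul, Matrix.one_mul, Matrix.smul_mul, Matrix.mul_assoc]
end
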